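/- arXiv:1412.0137 — 2 statements merged into one kernel-verified Lean document; each statement's English description precedes it below -/
import Mathlib

section
/- Let d ∈ ℕ, let p = (p₁,p₂) ∈ ℝ², and let χ = (P,Q) be a polynomial vector field with deg P ≤ d and deg Q ≤ d. If there exist d+2 pairwise distinct lines, all passing through the point p, each of which is invariant by χ, then (x−p₁)·Q(x,y) = (y−p₂)·P(x,y) identically; in particular, if χ is nonzero then χ is a central vector field (with center p) and the set of lines invariant by χ is infinite. -/
/-!
Let `R = (x - p₁) Q - (y - p₂) P`, a polynomial of degree at most `d + 1`. At a point `q` of an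
invariant line through `p`, both `χ(q)` and `q - p` are orthogonal to the normal of the line, so
`R(q) = 0`. Choose a direction `w` transversal to all `d + 2` lines. A line of direction `w` that
misses `p` meets them in `d + 2` distinct points, so `R` restricted to it vanishes identically.
Hence `R` vanishes off the line through `p` of direction `w`, and therefore `R = 0`. Conversely,
`R = 0` forces `χ(p) = 0` and then makes every line through `p` invariant.
-/

open MvPolynomial

/-- Evaluation of a bivariate polynomial at a point of `ℝ × ℝ`
(the variable `X 0` is `x`, the variable `X 1` is `y`). -/
noncomputable def pev (P : MvPolynomial (Fin 2) ℝ) (q : ℝ × ℝ) : ℝ :=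
  MvPolynomial.eval ![q.1, q.2] P

/-- The line `{(x, y) | a * x + b * y + c = 0}`. -/
def lineSet (a b c : ℝ) : Set (ℝ × ℝ) := {q : ℝ × ℝ | a * q.1 + b * q.2 + c = 0}

/-- A subset of `ℝ²` is a line if it is the zero set of an affine form
`a * x + b * y + c` with `(a, b) ≠ (0, 0)`. -/
def IsLine (L : Set (ℝ × ℝ)) : Prop :=
  ∃ a b c : ℝ, (a, b) ≠ (0, 0) ∧ L = lineSet a b c

/-- The line `L` is invariant by the polynomial vector field `χ = P ∂x + Q ∂y`:
for a defining affine form `a * x + b * y + c` of `L`, the polynomial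
`a * P + b * Q` vanishes at every point of `L`. -/
def InvLine (P Q : MvPolynomial (Fin 2) ℝ) (L : Set (ℝ × ℝ)) : Prop :=
  ∃ a b c : ℝ, (a, b) ≠ (0, 0) ∧ L = lineSet a b c ∧
    ∀ q ∈ L, a * pev P q + b * pev Q q = 0

/-- A nonzero polynomial vector field `(P, Q)` is central if there is a center
`(x₀, y₀)` with `(x - x₀) * Q = (y - y₀) * P` identically. -/
def IsCentral (P Q : MvPolynomial (Fin 2) ℝ) : Prop :=
  (P ≠ 0 ∨ Q ≠ 0) ∧ ∃ c : ℝ × ℝ, (X 0 - C c.1) * Q = (X 1 - C c.2) * P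

/-- A nonzero polynomial vector field `(P, Q)` is parallel if there is a direction
`v ≠ (0, 0)` with `v₁ * Q = v₂ * P` identically. -/
def IsParallelVF (P Q : MvPolynomial (Fin 2) ℝ) : Prop :=
  (P ≠ 0 ∨ Q ≠ 0) ∧ ∃ v : ℝ × ℝ, v ≠ (0, 0) ∧ C v.1 * Q = C v.2 * P

theorem eq_zero_of_mul_eq_zero_of_mul_eq_zero {x y r : ℝ} (hxy : (x, y) ≠ (0, 0))
    (hx : x * r = 0) (hy : y * r = 0) : r = 0 := by
  by_contra hr
  exact hxy (Prod.ext (by simpa [hr] using hx) (by simpa [hr] using hy))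

theorem mul_sub_mul_eq_zero_of_orthogonal {a b u v u' v' : ℝ} (hab : (a, b) ≠ (0, 0))
    (h : a * u + b * v = 0) (h' : a * u' + b * v' = 0) : u * v' - v * u' = 0 :=
  eq_zero_of_mul_eq_zero_of_mul_eq_zero hab (by linear_combination v' * h - v * h')
    (by linear_combination u * h' - u' * h)

theorem orthogonal_of_mul_sub_mul_eq_zero {a b u v u' v' : ℝ} (huv : (u, v) ≠ (0, 0))
    (hw : u * v' - v * u' = 0) (h : a * u + b * v = 0) : a * u' + b * v' = 0 :=
  eq_zero_of_mul_eq_zero_of_mul_eq_zero huv (by linear_combination u' * h + b * hw)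
    (by linear_combination v' * h - a * hw)

theorem mem_lineSet {a b c : ℝ} {q : ℝ × ℝ} :
    q ∈ lineSet a b c ↔ a * q.1 + b * q.2 + c = 0 :=
  Iff.rfl

theorem lineSet_eq_of_mem_of_mem {a b c a' b' c' : ℝ} {p r : ℝ × ℝ}
    (hab : (a, b) ≠ (0, 0)) (hab' : (a', b') ≠ (0, 0)) (hrp : r ≠ p)
    (hp : p ∈ lineSet a b c) (hp' : p ∈ lineSet a' b' c')
    (hr : r ∈ lineSet a b c) (hr' : r ∈ lineSet a' b' c') :
    lineSet a b c = lineSet a' b' c' := by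
  rw [mem_lineSet] at hp hp' hr hr'
  have hrp' : (r.1 - p.1, r.2 - p.2) ≠ (0, 0) := sub_ne_zero.mpr hrp
  have hdet : a * b' - b * a' = 0 :=
    mul_sub_mul_eq_zero_of_orthogonal hrp' (by linear_combination hr - hp)
      (by linear_combination hr' - hp')
  ext q
  rw [mem_lineSet, mem_lineSet]
  constructor
  · intro hq
    linear_combination orthogonal_of_mul_sub_mul_eq_zero hab hdet
      (a := q.1 - p.1) (b := q.2 - p.2) (by linear_combination hq - hp) + hp'
  · intro hq
    linear_combination orthogonal_of_mul_sub_mul_eq_zero hab' (u' := a) (v' := b)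
      (by linear_combination -hdet) (a := q.1 - p.1) (b := q.2 - p.2)
      (by linear_combination hq - hp') + hp

theorem add_smul_mem_lineSet {a b c : ℝ} (q w : ℝ × ℝ) (h : a * w.1 + b * w.2 ≠ 0) :
    q + (-(a * q.1 + b * q.2 + c) / (a * w.1 + b * w.2)) • w ∈ lineSet a b c := by
  simp only [mem_lineSet, Prod.fst_add, Prod.snd_add, Prod.smul_fst, Prod.smul_snd, smul_eq_mul]
  field_simp
  ring

theorem exists_forall_add_mul_ne_zero {ι : Type*} [Finite ι] (a b : ι → ℝ)
    (hab : ∀ i, (a i, b i) ≠ (0, 0)) : ∃ m : ℝ, ∀ i, a i + b i * m ≠ 0 := by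
  obtain ⟨m, hm⟩ := (Set.finite_range fun i => -a i / b i).infinite_compl.nonempty
  refine ⟨m, fun i h => ?_⟩
  by_cases hb : b i = 0
  · exact hab i (Prod.ext (by simpa [hb] using h) hb)
  · exact hm ⟨i, by field_simp; linarith⟩

theorem natDegree_aeval_le_totalDegree {R σ : Type*} [CommRing R] (g : σ → Polynomial R)
    (hg : ∀ i, (g i).natDegree ≤ 1) (F : MvPolynomial σ R) :
    (aeval g F).natDegree ≤ F.totalDegree := by
  rw [aeval_def, eval₂_eq]
  refine Polynomial.natDegree_sum_le_of_forall_le _ _ fun m hm => ?_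
  calc _ ≤ (∏ i ∈ m.support, g i ^ m i).natDegree := Polynomial.natDegree_C_mul_le _ _
    _ ≤ ∑ i ∈ m.support, (g i ^ m i).natDegree := Polynomial.natDegree_prod_le _ _
    _ ≤ ∑ i ∈ m.support, m i * 1 :=
        Finset.sum_le_sum fun i _ => Polynomial.natDegree_pow_le_of_le _ (hg i)
    _ ≤ F.totalDegree := by simpa [Finsupp.sum] using le_totalDegree hm

theorem pev_C (x : ℝ) (q : ℝ × ℝ) : pev (C x) q = x :=
  eval_C x

theorem pev_zero (q : ℝ × ℝ) : pev 0 q = 0 :=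
  map_zero _

theorem pev_mul (F G : MvPolynomial (Fin 2) ℝ) (q : ℝ × ℝ) :
    pev (F * G) q = pev F q * pev G q :=
  map_mul _ F G

theorem eq_zero_of_forall_pev_eq_zero {F : MvPolynomial (Fin 2) ℝ} (hF : ∀ q, pev F q = 0) :
    F = 0 :=
  MvPolynomial.funext fun v => by
    have hv : ![v 0, v 1] = v := funext fun i => by fin_cases i <;> rfl
    simpa [pev, hv] using hF (v 0, v 1)

noncomputable def restrictLine (F : MvPolynomial (Fin 2) ℝ) (q w : ℝ × ℝ) : Polynomial ℝ :=
  aeval ![Polynomial.C w.1 * Polynomial.X + Polynomial.C q.1,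
    Polynomial.C w.2 * Polynomial.X + Polynomial.C q.2] F

theorem eval_restrictLine (F : MvPolynomial (Fin 2) ℝ) (q w : ℝ × ℝ) (t : ℝ) :
    (restrictLine F q w).eval t = pev F (q + t • w) := by
  rw [restrictLine, ← Polynomial.coe_aeval_eq_eval, ← AlgHom.comp_apply, comp_aeval, pev,
    ← coe_aeval_eq_eval]
  refine congrArg (aeval · F) (funext fun i => ?_)
  fin_cases i <;>
    simp only [Fin.zero_eta, Fin.mk_one, Fin.isValue, Matrix.cons_val_zero,
      Matrix.cons_val_one, Matrix.cons_val_fin_one, Polynomial.coe_aeval_eq_eval,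
      Polynomial.eval_add, Polynomial.eval_mul, Polynomial.eval_C, Polynomial.eval_X,
      Prod.fst_add, Prod.snd_add, Prod.smul_fst, Prod.smul_snd, smul_eq_mul] <;>
    ring

theorem restrictLine_eval_zero (F : MvPolynomial (Fin 2) ℝ) (q w : ℝ × ℝ) :
    (restrictLine F q w).eval 0 = pev F q := by
  simp [eval_restrictLine]

theorem natDegree_restrictLine_le (F : MvPolynomial (Fin 2) ℝ) (q w : ℝ × ℝ) :
    (restrictLine F q w).natDegree ≤ F.totalDegree :=
  natDegree_aeval_le_totalDegree _
    (fun i => by fin_cases i <;> exact Polynomial.natDegree_linear_le) F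

theorem pev_eq_zero_of_injective_of_totalDegree_lt {ι : Type*} [Fintype ι]
    {F : MvPolynomial (Fin 2) ℝ} (q w : ℝ × ℝ) {t : ι → ℝ} (ht : Function.Injective t)
    (hdeg : F.totalDegree < Fintype.card ι) (hF : ∀ i, pev F (q + t i • w) = 0) :
    pev F q = 0 := by
  have h : restrictLine F q w = 0 :=
    Polynomial.eq_zero_of_natDegree_lt_card_of_eval_eq_zero _ ht
      (fun i => (eval_restrictLine F q w (t i)).trans (hF i))
      ((natDegree_restrictLine_le F q w).trans_lt hdeg)
  rw [← restrictLine_eval_zero, h, Polynomial.eval_zero]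

theorem pev_eq_zero_of_forall_ne_zero {F : MvPolynomial (Fin 2) ℝ} (q w : ℝ × ℝ)
    (hF : ∀ t : ℝ, t ≠ 0 → pev F (q + t • w) = 0) : pev F q = 0 := by
  have h : restrictLine F q w = 0 := by
    refine Polynomial.eq_zero_of_infinite_isRoot _
      ((Set.finite_singleton (0 : ℝ)).infinite_compl.mono fun t ht => ?_)
    exact (eval_restrictLine F q w t).trans (hF t ht)
  rw [← restrictLine_eval_zero, h, Polynomial.eval_zero]

theorem pev_eq_zero_of_transversal {ι : Type*} [Fintype ι] {F : MvPolynomial (Fin 2) ℝ}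
    {p q w : ℝ × ℝ} {a b c : ι → ℝ} (hab : ∀ i, (a i, b i) ≠ (0, 0))
    (hinj : Function.Injective fun i => lineSet (a i) (b i) (c i))
    (hp : ∀ i, p ∈ lineSet (a i) (b i) (c i)) (hw : ∀ i, a i * w.1 + b i * w.2 ≠ 0)
    (hq : (q.1 - p.1) * w.2 - (q.2 - p.2) * w.1 ≠ 0) (hdeg : F.totalDegree < Fintype.card ι)
    (hF : ∀ i, ∀ r ∈ lineSet (a i) (b i) (c i), pev F r = 0) : pev F q = 0 := by
  set t : ι → ℝ := fun i => -(a i * q.1 + b i * q.2 + c i) / (a i * w.1 + b i * w.2)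
  have hmem : ∀ i, q + t i • w ∈ lineSet (a i) (b i) (c i) := fun i =>
    add_smul_mem_lineSet q w (hw i)
  have hne : ∀ s : ℝ, q + s • w ≠ p := by
    rintro s rfl
    apply hq
    simp only [Prod.fst_add, Prod.snd_add, Prod.smul_fst, Prod.smul_snd, smul_eq_mul]
    ring
  refine pev_eq_zero_of_injective_of_totalDegree_lt q w (t := t) (fun i j hij => hinj ?_) hdeg
    fun i => hF i _ (hmem i)
  exact lineSet_eq_of_mem_of_mem (hab i) (hab j) (hne (t i)) (hp i) (hp j) (hmem i)
    (hij ▸ hmem j)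

noncomputable def radialWedge (p : ℝ × ℝ) (P Q : MvPolynomial (Fin 2) ℝ) :
    MvPolynomial (Fin 2) ℝ :=
  (X 0 - C p.1) * Q - (X 1 - C p.2) * P

theorem pev_radialWedge (p : ℝ × ℝ) (P Q : MvPolynomial (Fin 2) ℝ) (q : ℝ × ℝ) :
    pev (radialWedge p P Q) q = (q.1 - p.1) * pev Q q - (q.2 - p.2) * pev P q := by
  simp [radialWedge, pev]

theorem totalDegree_radialWedge_le {d : ℕ} (p : ℝ × ℝ) {P Q : MvPolynomial (Fin 2) ℝ}
    (hP : P.totalDegree ≤ d) (hQ : Q.totalDegree ≤ d) :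
    (radialWedge p P Q).totalDegree ≤ d + 1 := by
  have hX : ∀ (i : Fin 2) (x : ℝ), (X i - C x : MvPolynomial (Fin 2) ℝ).totalDegree ≤ 1 :=
    fun i x => (totalDegree_sub _ _).trans (by simp [totalDegree_X])
  refine (totalDegree_sub _ _).trans (max_le ?_ ?_) <;> refine (totalDegree_mul _ _).trans ?_
  · linarith [hX 0 p.1]
  · linarith [hX 1 p.2]

theorem eq_zero_of_pev_eq_zero_on_concurrent_lines {ι : Type*} [Fintype ι]
    {F : MvPolynomial (Fin 2) ℝ} {p : ℝ × ℝ} {L : ι → Set (ℝ × ℝ)}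
    (hLinj : Function.Injective L) (hL : ∀ i, IsLine (L i)) (hLp : ∀ i, p ∈ L i)
    (hdeg : F.totalDegree < Fintype.card ι) (hF : ∀ i, ∀ q ∈ L i, pev F q = 0) : F = 0 := by
  choose a b c hab hLeq using hL
  obtain rfl : L = fun i => lineSet (a i) (b i) (c i) := funext hLeq
  obtain ⟨m, hm⟩ := exists_forall_add_mul_ne_zero a b hab
  -- `ℓ` vanishes exactly on the line through `p` of slope `m`, and `F` vanishes off that line,
  -- so `F * ℓ = 0`.
  set ℓ := radialWedge p (C 1) (C m)
  have hℓ : ℓ ≠ 0 := fun h => by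
    have h1 := congrArg (pev · (p.1, p.2 - 1)) h
    simp only [ℓ, pev_radialWedge, pev_C] at h1
    simp [pev] at h1
  have hoff : ∀ q, pev ℓ q ≠ 0 → pev F q = 0 := fun q hq =>
    pev_eq_zero_of_transversal (w := (1, m)) hab hLinj hLp (by simpa using hm)
      (by simpa only [ℓ, pev_radialWedge, pev_C, mul_one] using hq) hdeg hF
  refine (mul_eq_zero.mp (eq_zero_of_forall_pev_eq_zero fun q => ?_)).resolve_right hℓ
  rw [pev_mul]
  by_cases hq : pev ℓ q = 0
  · rw [hq, mul_zero]
  · rw [hoff q hq, zero_mul]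

theorem InvLine.isLine {P Q : MvPolynomial (Fin 2) ℝ} {L : Set (ℝ × ℝ)} (h : InvLine P Q L) :
    IsLine L :=
  let ⟨a, b, c, hab, hL, _⟩ := h
  ⟨a, b, c, hab, hL⟩

theorem InvLine.pev_radialWedge_eq_zero {P Q : MvPolynomial (Fin 2) ℝ} {L : Set (ℝ × ℝ)}
    {p q : ℝ × ℝ} (h : InvLine P Q L) (hp : p ∈ L) (hq : q ∈ L) :
    pev (radialWedge p P Q) q = 0 := by
  obtain ⟨a, b, c, hab, rfl, hinv⟩ := h
  rw [pev_radialWedge]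
  refine mul_sub_mul_eq_zero_of_orthogonal hab ?_ (hinv q hq)
  rw [mem_lineSet] at hp hq
  linear_combination hq - hp

theorem pev_eq_zero_of_radialWedge_eq_zero {p : ℝ × ℝ} {P Q : MvPolynomial (Fin 2) ℝ}
    (h : radialWedge p P Q = 0) : pev P p = 0 ∧ pev Q p = 0 := by
  have hvan : ∀ q, (q.1 - p.1) * pev Q q - (q.2 - p.2) * pev P q = 0 := fun q => by
    rw [← pev_radialWedge, h, pev_zero]
  constructor
  · refine pev_eq_zero_of_forall_ne_zero p (0, 1) fun t ht => ?_
    have h1 := hvan (p + t • (0, 1))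
    simp only [Prod.fst_add, Prod.snd_add, Prod.smul_fst, Prod.smul_snd, smul_eq_mul] at h1
    have h2 : t * pev P (p + t • (0, 1)) = 0 := by linear_combination -h1
    exact (mul_eq_zero.mp h2).resolve_left ht
  · refine pev_eq_zero_of_forall_ne_zero p (1, 0) fun t ht => ?_
    have h1 := hvan (p + t • (1, 0))
    simp only [Prod.fst_add, Prod.snd_add, Prod.smul_fst, Prod.smul_snd, smul_eq_mul] at h1
    have h2 : t * pev Q (p + t • (1, 0)) = 0 := by linear_combination h1
    exact (mul_eq_zero.mp h2).resolve_left ht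

theorem invLine_of_radialWedge_eq_zero {p : ℝ × ℝ} {P Q : MvPolynomial (Fin 2) ℝ}
    (h : radialWedge p P Q = 0) {a b : ℝ} (hab : (a, b) ≠ (0, 0)) :
    InvLine P Q (lineSet a b (-(a * p.1 + b * p.2))) := by
  refine ⟨a, b, _, hab, rfl, fun q hq => ?_⟩
  obtain ⟨hPp, hQp⟩ := pev_eq_zero_of_radialWedge_eq_zero h
  by_cases hqp : q = p
  · rw [hqp, hPp, hQp]
    ring
  have hqp' : (q.1 - p.1, q.2 - p.2) ≠ (0, 0) := sub_ne_zero.mpr hqp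
  have hq' : a * (q.1 - p.1) + b * (q.2 - p.2) = 0 := by
    rw [mem_lineSet] at hq
    linear_combination hq
  have hw : (q.1 - p.1) * pev Q q - (q.2 - p.2) * pev P q = 0 := by
    rw [← pev_radialWedge, h, pev_zero]
  exact orthogonal_of_mul_sub_mul_eq_zero hqp' hw hq'

theorem infinite_setOf_invLine_of_radialWedge_eq_zero {p : ℝ × ℝ}
    {P Q : MvPolynomial (Fin 2) ℝ} (h : radialWedge p P Q = 0) :
    {M : Set (ℝ × ℝ) | InvLine P Q M}.Infinite := by
  refine Set.infinite_of_injective_forall_mem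
    (f := fun s : ℝ => lineSet 1 s (-(1 * p.1 + s * p.2))) (fun s s' hss => ?_)
    fun s => invLine_of_radialWedge_eq_zero h (by simp)
  have hmem : (p.1 - s, p.2 + 1) ∈ lineSet 1 s' (-(1 * p.1 + s' * p.2)) := by
    dsimp only at hss
    rw [← hss, mem_lineSet]
    ring
  rw [mem_lineSet] at hmem
  linarith

theorem concurrent_lines_force_central_general (d : ℕ) (p : ℝ × ℝ)
    (P Q : MvPolynomial (Fin 2) ℝ)
    (hP : P.totalDegree ≤ d) (hQ : Q.totalDegree ≤ d)
    (L : Fin (d + 2) → Set (ℝ × ℝ)) (hLinj : Function.Injective L)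
    (hLthru : ∀ i, p ∈ L i)
    (hLinv : ∀ i, InvLine P Q (L i)) :
    (X 0 - C p.1) * Q = (X 1 - C p.2) * P ∧
      ((P ≠ 0 ∨ Q ≠ 0) →
        IsCentral P Q ∧ {M : Set (ℝ × ℝ) | InvLine P Q M}.Infinite) := by
  have hdeg : (radialWedge p P Q).totalDegree < Fintype.card (Fin (d + 2)) := by
    simpa [Nat.lt_succ_iff] using totalDegree_radialWedge_le p hP hQ
  have hwedge : radialWedge p P Q = 0 :=
    eq_zero_of_pev_eq_zero_on_concurrent_lines hLinj (fun i => (hLinv i).isLine) hLthru hdeg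
      fun i _ hq => (hLinv i).pev_radialWedge_eq_zero (hLthru i) hq
  have hcentral : (X 0 - C p.1) * Q = (X 1 - C p.2) * P := sub_eq_zero.mp hwedge
  exact ⟨hcentral, fun hne =>
    ⟨⟨hne, p, hcentral⟩, infinite_setOf_invLine_of_radialWedge_eq_zero hwedge⟩⟩

/-- If a polynomial vector field `(P, Q)` with `deg P ≤ d`, `deg Q ≤ d` leaves
invariant `d + 2` pairwise distinct lines all passing through the point `p`, then
`(x - p₁) * Q = (y - p₂) * P` identically; in particular, if `(P, Q)` is nonzero
then it is a central vector field (with center `p`) and the set of lines invariant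
by `(P, Q)` is infinite. -/
theorem concurrent_lines_force_central (d : ℕ) (p : ℝ × ℝ)
    (P Q : MvPolynomial (Fin 2) ℝ)
    (hP : P.totalDegree ≤ d) (hQ : Q.totalDegree ≤ d)
    (L : Fin (d + 2) → Set (ℝ × ℝ)) (hLinj : Function.Injective L)
    (hLline : ∀ i, IsLine (L i)) (hLthru : ∀ i, p ∈ L i)
    (hLinv : ∀ i, InvLine P Q (L i)) :
    (X 0 - C p.1) * Q = (X 1 - C p.2) * P ∧
      ((P ≠ 0 ∨ Q ≠ 0) →
        IsCentral P Q ∧ {M : Set (ℝ × ℝ) | InvLine P Q M}.Infinite) :=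
  concurrent_lines_force_central_general d p P Q hP hQ L hLinj hLthru hLinv
end

section
/- Let d ∈ ℕ and let χ = (P,Q) be a polynomial vector field with deg P ≤ d and deg Q ≤ d. If there exist d+1 pairwise distinct parallel lines, all with the same normal direction (α,β) ≠ (0,0) (i.e., each defined by an equation αx+βy+γᵢ = 0), each of which is invariant by χ, then α·P + β·Q = 0 identically; in particular, if χ is nonzero then χ is a parallel vector field and the set of lines invariant by χ is infinite. -/
/-! A line `a x + b y + γ = 0` is invariant by `(P, Q)` exactly when `a P + b Q` vanishes on it,
since any other defining form of the line has a proportional normal. So `a P + b Q`, of degree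
at most `d`, vanishes on `d + 1` parallel lines; restricted to any line transverse to them it is
a univariate polynomial of degree at most `d` with `d + 1` roots, hence zero. Once
`a P + b Q = 0`, the field is parallel to `(b, -a)` and every line `a x + b y + c = 0` is
invariant. -/

open MvPolynomial

namespace MvPolynomial

open Polynomial in
theorem natDegree_aeval_le_totalDegree {R σ : Type*} [CommSemiring R] (p : MvPolynomial σ R)
    {F : σ → R[X]} (hF : ∀ i, (F i).natDegree ≤ 1) :
    (aeval F p).natDegree ≤ p.totalDegree := by
  rw [aeval_def, eval₂_eq]
  refine natDegree_sum_le_of_forall_le _ _ fun m hm => ?_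
  calc (algebraMap R R[X] (p.coeff m) * ∏ i ∈ m.support, F i ^ m i).natDegree
      ≤ (∏ i ∈ m.support, F i ^ m i).natDegree := natDegree_C_mul_le _ _
    _ ≤ ∑ i ∈ m.support, (F i ^ m i).natDegree := natDegree_prod_le _ _
    _ ≤ ∑ i ∈ m.support, m i := Finset.sum_le_sum fun i _ =>
        (natDegree_pow_le_of_le (m i) (hF i)).trans (mul_one _).le
    _ ≤ p.totalDegree := le_totalDegree hm

theorem eval_aeval_affine {R σ : Type*} [CommSemiring R] (p : MvPolynomial σ R)
    (x v : σ → R) (t : R) :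
    (aeval (fun j => Polynomial.C (v j) * Polynomial.X + Polynomial.C (x j)) p).eval t =
      eval (x + t • v) p := by
  have hline :
      (fun j => Polynomial.aeval t (Polynomial.C (v j) * Polynomial.X + Polynomial.C (x j))) =
        x + t • v := by
    funext j
    simp only [map_add, map_mul, Polynomial.aeval_C, Polynomial.aeval_X, Pi.add_apply,
      Pi.smul_apply, smul_eq_mul, Algebra.algebraMap_self, RingHom.id_apply]
    ring
  rw [← Polynomial.coe_aeval_eq_eval, comp_aeval_apply, hline]
  rfl

theorem eq_zero_of_eval_eq_zero_on_parallel_hyperplanes {K σ ι : Type*} [Field K] [Infinite K]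
    [Fintype σ] [Fintype ι] {p : MvPolynomial σ K} (w v : σ → K)
    (hwv : ∑ j, w j * v j ≠ 0)
    {γ : ι → K} (hγ : Function.Injective γ) (hcard : p.totalDegree < Fintype.card ι)
    (hp : ∀ i x, ∑ j, w j * x j + γ i = 0 → eval x p = 0) : p = 0 := by
  refine funext fun x => ?_
  let F : σ → Polynomial K := fun j => Polynomial.C (v j) * Polynomial.X + Polynomial.C (x j)
  let t : ι → K := fun i => -(∑ j, w j * x j + γ i) / ∑ j, w j * v j
  have ht : Function.Injective t := fun i i' h => hγ <| by
    simpa [t, div_left_inj' hwv] using h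
  have hroot : ∀ i, (aeval F p).eval (t i) = 0 := fun i => by
    refine (eval_aeval_affine p x v (t i)).trans (hp i _ ?_)
    simp only [Pi.add_apply, Pi.smul_apply, smul_eq_mul, mul_add, Finset.sum_add_distrib,
      mul_left_comm _ (t i), ← Finset.mul_sum]
    simp only [t]
    field_simp
    ring
  have hdeg : (aeval F p).natDegree < Fintype.card ι :=
    (natDegree_aeval_le_totalDegree p fun _ => Polynomial.natDegree_linear_le).trans_lt hcard
  have hzero := Polynomial.eq_zero_of_natDegree_lt_card_of_eval_eq_zero _ ht hroot hdeg
  simpa using (eval_aeval_affine p x v 0).symm.trans (by rw [hzero, Polynomial.eval_zero])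

end MvPolynomial

theorem sq_add_sq_ne_zero_of_ne {a b : ℝ} (hab : (a, b) ≠ (0, 0)) : a ^ 2 + b ^ 2 ≠ 0 := by
  rw [Ne, Prod.mk.injEq, not_and_or] at hab
  rcases hab with h | h <;> positivity

theorem foot_mem_lineSet {a b : ℝ} (hab : (a, b) ≠ (0, 0)) (c : ℝ) :
    (-c / (a ^ 2 + b ^ 2) * a, -c / (a ^ 2 + b ^ 2) * b) ∈ lineSet a b c := by
  have hs := sq_add_sq_ne_zero_of_ne hab
  simp only [lineSet, Set.mem_ofPred_eq]
  field_simp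
  ring

theorem lineSet_injective {a b : ℝ} (hab : (a, b) ≠ (0, 0)) :
    Function.Injective (lineSet a b) :=
  fun c c' h => by
    have hs := sq_add_sq_ne_zero_of_ne hab
    have hfoot := h ▸ foot_mem_lineSet hab c
    simp only [lineSet, Set.mem_ofPred_eq] at hfoot
    field_simp at hfoot
    exact mul_left_cancel₀ hs (by linear_combination -hfoot)

theorem mul_eq_mul_of_lineSet_subset {a b c a' b' c' : ℝ} (hab : (a, b) ≠ (0, 0))
    (h : lineSet a b c ⊆ lineSet a' b' c') : a * b' = a' * b := by
  have hfoot := foot_mem_lineSet hab c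
  have hshift : (-c / (a ^ 2 + b ^ 2) * a - b, -c / (a ^ 2 + b ^ 2) * b + a) ∈ lineSet a b c := by
    simp only [lineSet, Set.mem_ofPred_eq] at hfoot ⊢
    linear_combination hfoot
  have h₀ := h hfoot
  have h₁ := h hshift
  simp only [lineSet, Set.mem_ofPred_eq] at h₀ h₁
  linear_combination h₁ - h₀

theorem pev_C_mul_add_C_mul (a b : ℝ) (P Q : MvPolynomial (Fin 2) ℝ) (q : ℝ × ℝ) :
    pev (C a * P + C b * Q) q = a * pev P q + b * pev Q q := by
  simp [pev]

theorem eval_eq_pev (R : MvPolynomial (Fin 2) ℝ) (x : Fin 2 → ℝ) :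
    eval x R = pev R (x 0, x 1) := by
  rw [pev]
  congr
  funext i
  fin_cases i <;> rfl

theorem InvLine.pev_eq_zero {P Q : MvPolynomial (Fin 2) ℝ} {a b c : ℝ} (hab : (a, b) ≠ (0, 0))
    (h : InvLine P Q (lineSet a b c)) : ∀ q ∈ lineSet a b c, pev (C a * P + C b * Q) q = 0 := by
  obtain ⟨a', b', c', hne, heq, hv⟩ := h
  have hprop := mul_eq_mul_of_lineSet_subset hab heq.le
  intro q hq
  rw [pev_C_mul_add_C_mul]
  have hv' := hv q hq
  have ha' : a' * (a * pev P q + b * pev Q q) = 0 := by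
    linear_combination a * hv' - pev Q q * hprop
  have hb' : b' * (a * pev P q + b * pev Q q) = 0 := by
    linear_combination b * hv' + pev P q * hprop
  by_contra hX
  exact hne (by simp [(mul_eq_zero.1 ha').resolve_right hX, (mul_eq_zero.1 hb').resolve_right hX])

theorem totalDegree_C_mul_add_C_mul_le {d : ℕ} (a b : ℝ) {P Q : MvPolynomial (Fin 2) ℝ}
    (hP : P.totalDegree ≤ d) (hQ : Q.totalDegree ≤ d) : (C a * P + C b * Q).totalDegree ≤ d :=
  (totalDegree_add _ _).trans <| max_le
    ((totalDegree_mul _ _).trans (by simpa using hP))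
    ((totalDegree_mul _ _).trans (by simpa using hQ))

/-- If a polynomial vector field `(P, Q)` with `deg P ≤ d`, `deg Q ≤ d` leaves
invariant `d + 1` pairwise distinct parallel lines, all with the same normal
direction `(a, b) ≠ (0, 0)` (the `i`-th line being `a x + b y + γ i = 0`), then
`a * P + b * Q = 0` identically; in particular, if `(P, Q)` is nonzero then it is
a parallel vector field and the set of lines invariant by `(P, Q)` is infinite. -/
theorem parallel_lines_force_parallel (d : ℕ) (a b : ℝ) (hab : (a, b) ≠ (0, 0))
    (P Q : MvPolynomial (Fin 2) ℝ)
    (hP : P.totalDegree ≤ d) (hQ : Q.totalDegree ≤ d)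
    (γ : Fin (d + 1) → ℝ) (hγ : Function.Injective γ)
    (hinv : ∀ i, InvLine P Q (lineSet a b (γ i))) :
    C a * P + C b * Q = 0 ∧
      ((P ≠ 0 ∨ Q ≠ 0) →
        IsParallelVF P Q ∧ {M : Set (ℝ × ℝ) | InvLine P Q M}.Infinite) := by
  have hvan : C a * P + C b * Q = 0 := by
    refine eq_zero_of_eval_eq_zero_on_parallel_hyperplanes ![a, b] ![a, b]
      (by simpa [Fin.sum_univ_two, sq] using sq_add_sq_ne_zero_of_ne hab) hγ
      (by simpa using Nat.lt_succ_of_le (totalDegree_C_mul_add_C_mul_le a b hP hQ)) fun i x hx => ?_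
    rw [eval_eq_pev]
    exact (hinv i).pev_eq_zero hab _ (by simpa [Fin.sum_univ_two, lineSet] using hx)
  refine ⟨hvan, fun hne => ⟨⟨hne, (b, -a), ?_, ?_⟩, ?_⟩⟩
  · simpa [and_comm] using hab
  · simp only [map_neg]
    linear_combination hvan
  · refine Set.infinite_of_injective_forall_mem (lineSet_injective hab) fun c =>
      ⟨a, b, c, hab, rfl, fun q _ => ?_⟩
    rw [← pev_C_mul_add_C_mul, hvan]
    simp [pev]
end
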